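/- Suppose n ≥ 2, θ ≥ max(1, 2‖P‖L√n/μ), and let v : [0,∞) → ℝ be continuous and bounded. Let x, z : [0,∞) → ℝⁿ be differentiable functions satisfying, for all t ≥ 0: x′(t) = F(x(t)); z_i′(t) = f_i(z₁(t),…,z_i(t)) + z_{i+1}(t) + θⁱ k_i (z₁(t) − x₁(t) + v(t)) for i = 1,…,n−1; and z_n′(t) = f_n(z₁(t),…,z_n(t)) + θⁿ k_n (z₁(t) − x₁(t) + v(t)). Then for all t ≥ 0: |f₁(z₁(t)) + z₂(t) − f₁(x₁(t)) − x₂(t)| ≤ (L + θ)·√(K₂/K₁)·exp(−θμt/(4‖P‖))·‖z(0) − x(0)‖ + 2(L + θ)·(‖P‖‖k‖/μ)·√(K₂/K₁)·sup_{0≤τ≤t}|v(τ)|. -/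

import Mathlib

/-!
Write `ε = Δ_θ (z - x)` with `(Δ_θ e)ᵢ = θ⁻ⁱ eᵢ` (indices from `0`). Then
`ε' = θ (A + k cᵀ) ε + Δ_θ (f(z) - f(x)) + θ v k`, and since `fᵢ` depends only on the coordinates
`j ≤ i` and `θ ≥ 1`, the nonlinear term is bounded by `L √n ‖ε‖` uniformly in `θ`.
Along `V = εᵀ P ε` the gain condition `θ μ ≥ 2 ‖P‖ L √n` lets the Hurwitz part absorb that term
and Young's inequality handles the input, so `V' ≤ -(θ μ / (2 ‖P‖)) V + C` with
`C = 2 θ ‖P‖² ‖k‖² (sup |v|)² / μ`. Grönwall, the sandwich `K₁ ‖ε‖² ≤ V ≤ K₂ ‖ε‖²` and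
`‖P‖ ≤ K₂` bound `‖ε(t)‖`, and the output error is at most `(L + θ) ‖ε(t)‖`.
-/

open Matrix Set

lemma le_exp_mul_add_div_of_hasDerivAt_le {g g' : ℝ → ℝ} {a C T : ℝ} (ha : 0 < a) (hC : 0 ≤ C)
    (hT : 0 ≤ T) (hg : ∀ t ∈ Icc 0 T, HasDerivAt g (g' t) t)
    (hbound : ∀ t ∈ Icc 0 T, g' t ≤ -a * g t + C) :
    g T ≤ Real.exp (-(a * T)) * g 0 + C / a := by
  have h := le_gronwallBound_of_liminf_deriv_right_le
    (fun t ht => (hg t ht).continuousAt.continuousWithinAt)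
    (fun t ht _ hr => (hg t (Ico_subset_Icc_self ht)).hasDerivWithinAt.liminf_right_slope_le hr)
    le_rfl (fun t ht => hbound t (Ico_subset_Icc_self ht)) T ⟨hT, le_rfl⟩
  rw [gronwallBound_of_K_ne_0 (neg_ne_zero.2 ha.ne'), sub_zero] at h
  have hexp : 0 ≤ Real.exp (-a * T) := (Real.exp_pos _).le
  calc g T ≤ g 0 * Real.exp (-a * T) + C / -a * (Real.exp (-a * T) - 1) := h
    _ = Real.exp (-(a * T)) * g 0 + C / a - C / a * Real.exp (-a * T) := by
        rw [neg_mul, div_neg]; ring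
    _ ≤ _ := sub_le_self _ (by positivity)

lemma Real.sqrt_le_add_of_le_sq_add_sq {a x y : ℝ} (hx : 0 ≤ x) (hy : 0 ≤ y)
    (h : a ≤ x ^ 2 + y ^ 2) : √a ≤ x + y :=
  (Real.sqrt_le_left (by positivity)).2 (by nlinarith [mul_nonneg hx hy])

lemma sqrt_sum_sq_le_sqrt_card_mul {ι : Type*} [Fintype ι] {u : ι → ℝ} {B : ℝ} (hB : 0 ≤ B)
    (h : ∀ i, |u i| ≤ B) : √(∑ i, u i ^ 2) ≤ √(Fintype.card ι) * B := by
  rw [← Real.sqrt_sq hB, ← Real.sqrt_mul (Nat.cast_nonneg _)]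
  gcongr
  simpa using Finset.sum_le_sum fun i (_ : i ∈ Finset.univ) =>
    sq_le_sq.2 ((h i).trans (le_abs_self B))

lemma EuclideanSpace.norm_toLp_eq_sqrt_sum_sq {ι : Type*} [Fintype ι] (u : ι → ℝ) :
    ‖(WithLp.toLp 2 u : EuclideanSpace ℝ ι)‖ = √(∑ i, u i ^ 2) := by
  simp [EuclideanSpace.norm_eq]

namespace Matrix

variable {ι : Type*} [Fintype ι] {P : Matrix ι ι ℝ}

lemma abs_dotProduct_mulVec_le [DecidableEq ι] (P : Matrix ι ι ℝ) (u w : ι → ℝ) :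
    |u ⬝ᵥ (P *ᵥ w)| ≤ ‖toEuclideanCLM (𝕜 := ℝ) P‖ * √(∑ i, u i ^ 2) * √(∑ i, w i ^ 2) := by
  set T := toEuclideanCLM (n := ι) (𝕜 := ℝ) P
  calc |u ⬝ᵥ (P *ᵥ w)| = |inner ℝ (WithLp.toLp 2 u) (T (WithLp.toLp 2 w))| := by
        rw [inner_toEuclideanCLM]
    _ ≤ ‖WithLp.toLp 2 u‖ * ‖T (WithLp.toLp 2 w)‖ := abs_real_inner_le_norm _ _
    _ ≤ ‖WithLp.toLp 2 u‖ * (‖T‖ * ‖WithLp.toLp 2 w‖) := by gcongr; exact T.le_opNorm _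
    _ = _ := by simp only [EuclideanSpace.norm_toLp_eq_sqrt_sum_sq]; ring

lemma IsSymm.norm_toEuclideanCLM_le [DecidableEq ι] (hP : P.IsSymm) {K : ℝ} (hK : 0 ≤ K)
    (hpos : ∀ u, 0 ≤ u ⬝ᵥ (P *ᵥ u)) (h : ∀ u, u ⬝ᵥ (P *ᵥ u) ≤ K * ∑ i, u i ^ 2) :
    ‖toEuclideanCLM (𝕜 := ℝ) P‖ ≤ K := by
  rw [ContinuousLinearMap.norm_eq_iSup_rayleighQuotient (T := toEuclideanCLM (n := ι) (𝕜 := ℝ) P)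
    (isSymmetric_toEuclideanLin_iff.mpr (isHermitian_iff_isSymm.mpr hP))]
  refine ciSup_le fun x => ?_
  rw [ContinuousLinearMap.rayleighQuotient, ContinuousLinearMap.reApplyInnerSelf_apply,
    RCLike.re_to_real, real_inner_comm, inner_toEuclideanCLM, EuclideanSpace.real_norm_sq_eq,
    abs_div, abs_of_nonneg (hpos x), abs_of_nonneg (by positivity : (0 : ℝ) ≤ ∑ i, x i ^ 2)]
  exact div_le_of_le_mul₀ (by positivity) hK (h x)

lemma le_norm_toEuclideanCLM_of_le_dotProduct_mulVec_self [DecidableEq ι] [Nonempty ι] {K : ℝ}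
    (h : ∀ u, K * ∑ i, u i ^ 2 ≤ u ⬝ᵥ (P *ᵥ u)) : K ≤ ‖toEuclideanCLM (𝕜 := ℝ) P‖ := by
  obtain ⟨i⟩ := ‹Nonempty ι›
  have hunit : ∑ j, (Pi.single i 1 : ι → ℝ) j ^ 2 = 1 := by
    simp [Pi.single_apply]
  simpa [hunit] using (h (Pi.single i 1)).trans
    ((le_abs_self _).trans (abs_dotProduct_mulVec_le P _ _))

lemma IsSymm.two_mul_dotProduct_mulVec_mulVec_le (hP : P.IsSymm) {M : Matrix ι ι ℝ} {μ : ℝ}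
    (hLyap : ∀ u, u ⬝ᵥ ((P * M + Mᵀ * P) *ᵥ u) ≤ -2 * μ * ∑ i, u i ^ 2) (u : ι → ℝ) :
    2 * (u ⬝ᵥ (P *ᵥ (M *ᵥ u))) ≤ -2 * μ * ∑ i, u i ^ 2 := by
  have hMP : u ⬝ᵥ ((Mᵀ * P) *ᵥ u) = u ⬝ᵥ (P *ᵥ (M *ᵥ u)) := by
    rw [dotProduct_mulVec, ← mulVec_transpose, dotProduct_comm, transpose_mul,
      transpose_transpose, hP.eq, ← mulVec_mulVec]
  have h := hLyap u
  rwa [add_mulVec, dotProduct_add, ← mulVec_mulVec, hMP, ← two_mul] at h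

lemma IsSymm.hasDerivAt_dotProduct_mulVec_self (hP : P.IsSymm) {u : ℝ → ι → ℝ} {u' : ι → ℝ}
    {t : ℝ} (hu : ∀ i, HasDerivAt (fun s => u s i) (u' i) t) :
    HasDerivAt (fun s => u s ⬝ᵥ (P *ᵥ u s)) (2 * (u t ⬝ᵥ (P *ᵥ u'))) t := by
  have hPu : HasDerivAt (fun s => P *ᵥ u s) (P *ᵥ u') t :=
    (mulVecLin P).toContinuousLinearMap.hasFDerivAt.comp_hasDerivAt t (hasDerivAt_pi.2 hu)
  have h := HasDerivAt.fun_sum fun i (_ : i ∈ Finset.univ) => (hu i).mul (hasDerivAt_pi.1 hPu i)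
  refine h.congr_deriv ?_
  rw [Finset.sum_add_distrib]
  change u' ⬝ᵥ (P *ᵥ u t) + u t ⬝ᵥ (P *ᵥ u') = _
  rw [dotProduct_comm u', dotProduct_mulVec, ← vecMul_transpose, hP.eq, ← dotProduct_mulVec]
  ring

lemma IsSymm.two_mul_dotProduct_mulVec_perturbed_le [DecidableEq ι] (hP : P.IsSymm)
    {M : Matrix ι ι ℝ} {μ θ B w S : ℝ} {u d k : ι → ℝ}
    (hLyap : ∀ u, u ⬝ᵥ ((P * M + Mᵀ * P) *ᵥ u) ≤ -2 * μ * ∑ i, u i ^ 2) (hμ : 0 < μ)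
    (hθ : 0 ≤ θ) (hB : 2 * ‖toEuclideanCLM (𝕜 := ℝ) P‖ * B ≤ θ * μ)
    (hd : √(∑ i, d i ^ 2) ≤ B * √(∑ i, u i ^ 2)) (hw : |w| ≤ S) :
    2 * (u ⬝ᵥ (P *ᵥ (d + θ • (M *ᵥ u) + (θ * w) • k))) ≤
      -(θ * μ / 2) * ∑ i, u i ^ 2
        + 2 * θ * ‖toEuclideanCLM (𝕜 := ℝ) P‖ ^ 2 * (∑ i, k i ^ 2) * S ^ 2 / μ := by
  set p := ‖toEuclideanCLM (𝕜 := ℝ) P‖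
  have hu := Real.sq_sqrt (by positivity : (0 : ℝ) ≤ ∑ i, u i ^ 2)
  have hk := Real.sq_sqrt (by positivity : (0 : ℝ) ≤ ∑ i, k i ^ 2)
  have hperturb : 2 * (u ⬝ᵥ (P *ᵥ d)) ≤ θ * μ * ∑ i, u i ^ 2 :=
    calc 2 * (u ⬝ᵥ (P *ᵥ d)) ≤ 2 * (p * √(∑ i, u i ^ 2) * √(∑ i, d i ^ 2)) := by
          gcongr; exact (le_abs_self _).trans (abs_dotProduct_mulVec_le P u d)
      _ ≤ 2 * (p * √(∑ i, u i ^ 2) * (B * √(∑ i, u i ^ 2))) := by gcongr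
      _ = 2 * p * B * ∑ i, u i ^ 2 := by linear_combination 2 * p * B * hu
      _ ≤ θ * μ * ∑ i, u i ^ 2 := by gcongr
  have hinput : 2 * (w * (u ⬝ᵥ (P *ᵥ k))) ≤
      μ / 2 * ∑ i, u i ^ 2 + 2 * p ^ 2 * (∑ i, k i ^ 2) * S ^ 2 / μ := by
    have h : w * (u ⬝ᵥ (P *ᵥ k)) ≤ S * (p * √(∑ i, u i ^ 2) * √(∑ i, k i ^ 2)) :=
      (le_abs_self _).trans <| (abs_mul _ _).trans_le <|
        mul_le_mul hw (abs_dotProduct_mulVec_le P u k) (abs_nonneg _) ((abs_nonneg _).trans hw)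
    -- Young: `2 (S p ‖u‖ ‖k‖) ≤ (μ / 2) ‖u‖² + (2 / μ) (S p ‖k‖)²`
    rw [← sub_le_iff_le_add', le_div_iff₀ hμ]
    linear_combination 2 * μ * h
      + (1 / 2) * sq_nonneg (μ * √(∑ i, u i ^ 2) - 2 * p * S * √(∑ i, k i ^ 2))
      + (μ ^ 2 / 2) * hu + 2 * p ^ 2 * S ^ 2 * hk
  have hsplit : u ⬝ᵥ (P *ᵥ (d + θ • (M *ᵥ u) + (θ * w) • k)) =
      u ⬝ᵥ (P *ᵥ d) + θ * (u ⬝ᵥ (P *ᵥ (M *ᵥ u))) + θ * (w * (u ⬝ᵥ (P *ᵥ k))) := by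
    simp only [mulVec_add, mulVec_smul, dotProduct_add, dotProduct_smul, smul_eq_mul]
    ring
  rw [hsplit]
  calc _ = 2 * (u ⬝ᵥ (P *ᵥ d)) + θ * (2 * (u ⬝ᵥ (P *ᵥ (M *ᵥ u))))
        + θ * (2 * (w * (u ⬝ᵥ (P *ᵥ k)))) := by ring
    _ ≤ θ * μ * ∑ i, u i ^ 2 + θ * (-2 * μ * ∑ i, u i ^ 2)
        + θ * (μ / 2 * ∑ i, u i ^ 2 + 2 * p ^ 2 * (∑ i, k i ^ 2) * S ^ 2 / μ) :=
        add_le_add (add_le_add hperturb (mul_le_mul_of_nonneg_left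
          (hP.two_mul_dotProduct_mulVec_mulVec_le hLyap u) hθ))
          (mul_le_mul_of_nonneg_left hinput hθ)
    _ = _ := by ring

section Perturbed

variable [DecidableEq ι] {M : Matrix ι ι ℝ} {μ θ B S T : ℝ} {k : ι → ℝ} {u d : ℝ → ι → ℝ}
  {w : ℝ → ℝ}

lemma IsSymm.dotProduct_mulVec_self_le_exp (hP : P.IsSymm)
    (hLyap : ∀ u, u ⬝ᵥ ((P * M + Mᵀ * P) *ᵥ u) ≤ -2 * μ * ∑ i, u i ^ 2) (hμ : 0 < μ)
    (hθ : 0 < θ) (hp : 0 < ‖toEuclideanCLM (𝕜 := ℝ) P‖)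
    (hB : 2 * ‖toEuclideanCLM (𝕜 := ℝ) P‖ * B ≤ θ * μ) (hT : 0 ≤ T)
    (hu : ∀ t ∈ Icc 0 T, ∀ i,
      HasDerivAt (fun s => u s i) ((d t + θ • (M *ᵥ u t) + (θ * w t) • k) i) t)
    (hd : ∀ t ∈ Icc 0 T, √(∑ i, d t i ^ 2) ≤ B * √(∑ i, u t i ^ 2))
    (hw : ∀ t ∈ Icc 0 T, |w t| ≤ S) :
    u T ⬝ᵥ (P *ᵥ u T) ≤
      Real.exp (-(θ * μ / (2 * ‖toEuclideanCLM (𝕜 := ℝ) P‖) * T)) * (u 0 ⬝ᵥ (P *ᵥ u 0))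
        + 4 * ‖toEuclideanCLM (𝕜 := ℝ) P‖ ^ 3 * (∑ i, k i ^ 2) * S ^ 2 / μ ^ 2 := by
  set p := ‖toEuclideanCLM (𝕜 := ℝ) P‖
  have hCa : 2 * θ * p ^ 2 * (∑ i, k i ^ 2) * S ^ 2 / μ / (θ * μ / (2 * p)) =
      4 * p ^ 3 * (∑ i, k i ^ 2) * S ^ 2 / μ ^ 2 := by
    field_simp; ring
  rw [← hCa]
  refine le_exp_mul_add_div_of_hasDerivAt_le (by positivity) (by positivity) hT
    (fun t ht => hP.hasDerivAt_dotProduct_mulVec_self (hu t ht)) fun t ht => ?_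
  have hV : u t ⬝ᵥ (P *ᵥ u t) ≤ p * ∑ i, u t i ^ 2 :=
    (le_abs_self _).trans <| (abs_dotProduct_mulVec_le P _ _).trans_eq <| by
      rw [mul_assoc, Real.mul_self_sqrt (by positivity)]
  have hdecay : θ * μ / (2 * p) * (u t ⬝ᵥ (P *ᵥ u t)) ≤ θ * μ / 2 * ∑ i, u t i ^ 2 :=
    calc _ ≤ θ * μ / (2 * p) * (p * ∑ i, u t i ^ 2) := by gcongr
      _ = θ * μ / 2 * ∑ i, u t i ^ 2 := by field_simp
  linarith [hP.two_mul_dotProduct_mulVec_perturbed_le (k := k) hLyap hμ hθ.le hB (hd t ht)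
    (hw t ht)]

lemma IsSymm.sqrt_sum_sq_le_of_hasDerivAt [Nonempty ι] (hP : P.IsSymm) {K₁ K₂ : ℝ}
    (hLyap : ∀ u, u ⬝ᵥ ((P * M + Mᵀ * P) *ᵥ u) ≤ -2 * μ * ∑ i, u i ^ 2)
    (hbounds : ∀ u : ι → ℝ,
      K₁ * ∑ i, u i ^ 2 ≤ u ⬝ᵥ (P *ᵥ u) ∧ u ⬝ᵥ (P *ᵥ u) ≤ K₂ * ∑ i, u i ^ 2)
    (hμ : 0 < μ) (hK₁ : 0 < K₁) (hK₂ : 0 < K₂) (hθ : 0 < θ)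
    (hB : 2 * ‖toEuclideanCLM (𝕜 := ℝ) P‖ * B ≤ θ * μ) (hT : 0 ≤ T)
    (hu : ∀ t ∈ Icc 0 T, ∀ i,
      HasDerivAt (fun s => u s i) ((d t + θ • (M *ᵥ u t) + (θ * w t) • k) i) t)
    (hd : ∀ t ∈ Icc 0 T, √(∑ i, d t i ^ 2) ≤ B * √(∑ i, u t i ^ 2))
    (hw : ∀ t ∈ Icc 0 T, |w t| ≤ S) :
    √(∑ i, u T i ^ 2) ≤
      √(K₂ / K₁) * Real.exp (-(θ * μ * T / (4 * ‖toEuclideanCLM (𝕜 := ℝ) P‖)))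
          * √(∑ i, u 0 i ^ 2)
        + 2 * (‖toEuclideanCLM (𝕜 := ℝ) P‖ * √(∑ i, k i ^ 2) / μ) * √(K₂ / K₁) * S := by
  set p := ‖toEuclideanCLM (𝕜 := ℝ) P‖
  set E := Real.exp (-(θ * μ * T / (4 * p)))
  have hS : 0 ≤ S := (abs_nonneg _).trans (hw 0 ⟨le_rfl, hT⟩)
  have hK₁p : K₁ ≤ p := le_norm_toEuclideanCLM_of_le_dotProduct_mulVec_self fun u => (hbounds u).1
  have hpK₂ : p ≤ K₂ := hP.norm_toEuclideanCLM_le hK₂.le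
    (fun u => (mul_nonneg hK₁.le (by positivity)).trans (hbounds u).1) fun u => (hbounds u).2
  have hV := hP.dotProduct_mulVec_self_le_exp hLyap hμ hθ (hK₁.trans_le hK₁p) hB hT hu hd hw
  have hE : Real.exp (-(θ * μ / (2 * p) * T)) = E ^ 2 := by
    rw [sq, ← Real.exp_add]; ring_nf
  rw [hE, pow_succ] at hV
  have hN : K₁ * ∑ i, u T i ^ 2 ≤
      K₂ * E ^ 2 * ∑ i, u 0 i ^ 2 + 4 * (p ^ 2 * K₂) * (∑ i, k i ^ 2) * S ^ 2 / μ ^ 2 :=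
    calc K₁ * ∑ i, u T i ^ 2 ≤ u T ⬝ᵥ (P *ᵥ u T) := (hbounds _).1
      _ ≤ E ^ 2 * (u 0 ⬝ᵥ (P *ᵥ u 0)) + 4 * (p ^ 2 * p) * (∑ i, k i ^ 2) * S ^ 2 / μ ^ 2 := hV
      _ ≤ E ^ 2 * (K₂ * ∑ i, u 0 i ^ 2) + 4 * (p ^ 2 * K₂) * (∑ i, k i ^ 2) * S ^ 2 / μ ^ 2 := by
          gcongr; exact (hbounds _).2
      _ = _ := by ring
  refine Real.sqrt_le_add_of_le_sq_add_sq (by positivity) (by positivity) ?_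
  rw [mul_pow, mul_pow, mul_pow, mul_pow, mul_pow, div_pow, mul_pow,
    Real.sq_sqrt (by positivity : 0 ≤ K₂ / K₁), Real.sq_sqrt (by positivity : 0 ≤ ∑ i, u 0 i ^ 2),
    Real.sq_sqrt (by positivity : 0 ≤ ∑ i, k i ^ 2), ← mul_le_mul_iff_right₀ hK₁]
  exact hN.trans_eq (by field_simp; ring)

end Perturbed

end Matrix

section HighGain

variable {n : ℕ} {θ : ℝ}

noncomputable def highGainScale (θ : ℝ) (e : Fin n → ℝ) : Fin n → ℝ :=
  fun i => (θ ^ (i : ℕ))⁻¹ * e i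

lemma sum_sq_highGainScale_le (hθ : 1 ≤ θ) (e : Fin n → ℝ) :
    ∑ i, highGainScale θ e i ^ 2 ≤ ∑ i, e i ^ 2 :=
  Finset.sum_le_sum fun i _ => by
    rw [highGainScale, mul_pow]
    exact mul_le_of_le_one_left (sq_nonneg _)
      (pow_le_one₀ (by positivity) (inv_le_one_of_one_le₀ (one_le_pow₀ hθ)))

lemma sub_eq_pow_mul_highGainScale (hθ : θ ≠ 0) (x z : Fin n → ℝ) (i : Fin n) :
    z i - x i = θ ^ (i : ℕ) * highGainScale θ (z - x) i := by
  simp [highGainScale, hθ]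

lemma abs_highGainScale_sub_le {L : ℝ} {f : Fin n → (Fin n → ℝ) → ℝ} (hL : 0 ≤ L) (hθ : 1 ≤ θ)
    (hfLip : ∀ i (x z : Fin n → ℝ), |f i x - f i z| ≤
      L * √(∑ j ∈ Finset.univ.filter (fun j => j ≤ i), (x j - z j) ^ 2))
    (x z : Fin n → ℝ) (i : Fin n) :
    |highGainScale θ (fun j => f j z - f j x) i| ≤ L * √(∑ j, highGainScale θ (z - x) j ^ 2) := by
  set ε := highGainScale θ (z - x)
  have hθ0 : 0 < θ := zero_lt_one.trans_le hθ
  have hθi : 0 < θ ^ (i : ℕ) := by positivity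
  -- in the scaled coordinates, the lower-triangular dependence costs at most a factor `θ ^ i`
  have hsum : ∑ j ∈ Finset.univ.filter (fun j => j ≤ i), (z j - x j) ^ 2 ≤
      (θ ^ (i : ℕ)) ^ 2 * ∑ j, ε j ^ 2 := by
    rw [Finset.mul_sum]
    refine (Finset.sum_le_sum fun j hj => ?_).trans
      (Finset.sum_le_sum_of_subset_of_nonneg (Finset.filter_subset _ _) fun j _ _ => by positivity)
    rw [sub_eq_pow_mul_highGainScale hθ0.ne' x z j, mul_pow]
    gcongr
    exact (Finset.mem_filter.1 hj).2
  calc |highGainScale θ (fun j => f j z - f j x) i|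
      = (θ ^ (i : ℕ))⁻¹ * |f i z - f i x| := by
        rw [highGainScale, abs_mul, abs_of_pos (inv_pos.2 hθi)]
    _ ≤ (θ ^ (i : ℕ))⁻¹ * (L * √((θ ^ (i : ℕ)) ^ 2 * ∑ j, ε j ^ 2)) := by
        gcongr
        exact (hfLip i z x).trans (by gcongr)
    _ = L * √(∑ j, ε j ^ 2) := by
        rw [Real.sqrt_mul (by positivity), Real.sqrt_sq hθi.le]
        field_simp

lemma abs_output_sub_le {L : ℝ} {f : Fin n → (Fin n → ℝ) → ℝ} (hL : 0 ≤ L) (hθ : 1 ≤ θ)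
    (hfLip : ∀ i (x z : Fin n → ℝ), |f i x - f i z| ≤
      L * √(∑ j ∈ Finset.univ.filter (fun j => j ≤ i), (x j - z j) ^ 2))
    (x z : Fin n → ℝ) {i₀ i₁ : Fin n} (hi₀ : (i₀ : ℕ) = 0) (hi₁ : (i₁ : ℕ) = 1) :
    |f i₀ z + z i₁ - f i₀ x - x i₁| ≤ (L + θ) * √(∑ j, highGainScale θ (z - x) j ^ 2) := by
  set N := ∑ j, highGainScale θ (z - x) j ^ 2
  have hθ0 : 0 < θ := zero_lt_one.trans_le hθ
  have hf : |f i₀ z - f i₀ x| ≤ L * √N := by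
    have h := abs_highGainScale_sub_le hL hθ hfLip x z i₀
    rwa [highGainScale, hi₀, pow_zero, inv_one, one_mul] at h
  have hz : |z i₁ - x i₁| ≤ θ * √N := by
    rw [sub_eq_pow_mul_highGainScale hθ0.ne' x z i₁, hi₁, pow_one, abs_mul,
      abs_of_pos hθ0]
    gcongr
    exact Real.abs_le_sqrt (Finset.single_le_sum (fun j _ => sq_nonneg _) (Finset.mem_univ i₁))
  calc |f i₀ z + z i₁ - f i₀ x - x i₁| = |(f i₀ z - f i₀ x) + (z i₁ - x i₁)| := by ring_nf
    _ ≤ L * √N + θ * √N := (abs_add_le _ _).trans (add_le_add hf hz)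
    _ = (L + θ) * √N := by ring

lemma shift_add_vecMulVec_mulVec_apply {A : Matrix (Fin n) (Fin n) ℝ} {c : Fin n → ℝ}
    (hA : ∀ i j : Fin n, A i j = if (j : ℕ) = (i : ℕ) + 1 then 1 else 0)
    (hc : ∀ i, c i = if (i : ℕ) = 0 then 1 else 0) (h0 : 0 < n) (k w : Fin n → ℝ) (i : Fin n) :
    ((A + vecMulVec k c) *ᵥ w) i =
      (if h : (i : ℕ) + 1 < n then w ⟨(i : ℕ) + 1, h⟩ else 0) + k i * w ⟨0, h0⟩ := by
  have hcw : c ⬝ᵥ w = w ⟨0, h0⟩ := by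
    rw [dotProduct, Finset.sum_eq_single ⟨0, h0⟩] <;> simp_all [Fin.ext_iff]
  have hAw : (A *ᵥ w) i = if h : (i : ℕ) + 1 < n then w ⟨(i : ℕ) + 1, h⟩ else 0 := by
    split_ifs with h
    · rw [mulVec, dotProduct, Finset.sum_eq_single ⟨(i : ℕ) + 1, h⟩] <;> simp_all [Fin.ext_iff]
    · refine (Finset.sum_eq_zero fun j _ => ?_ : ∑ j, A i j * w j = 0)
      rw [hA, if_neg fun hj : (j : ℕ) = i + 1 => h (hj ▸ j.isLt), zero_mul]
  rw [add_mulVec, Pi.add_apply, hAw, vecMulVec_mulVec, hcw]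
  simp

lemma hasDerivAt_highGainScale_sub {f : Fin n → (Fin n → ℝ) → ℝ} {A : Matrix (Fin n) (Fin n) ℝ}
    {c k : Fin n → ℝ} {x z : ℝ → Fin n → ℝ} {v t : ℝ} (h0 : 0 < n) (hθ : θ ≠ 0)
    (hA : ∀ i j : Fin n, A i j = if (j : ℕ) = (i : ℕ) + 1 then 1 else 0)
    (hc : ∀ i, c i = if (i : ℕ) = 0 then 1 else 0)
    (hx : ∀ i, HasDerivAt (fun s => x s i)
      (f i (x t) + if h : (i : ℕ) + 1 < n then x t ⟨(i : ℕ) + 1, h⟩ else 0) t)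
    (hz : ∀ i, HasDerivAt (fun s => z s i)
      (f i (z t) + (if h : (i : ℕ) + 1 < n then z t ⟨(i : ℕ) + 1, h⟩ else 0)
        + θ ^ ((i : ℕ) + 1) * k i * (z t ⟨0, h0⟩ - x t ⟨0, h0⟩ + v)) t) (i : Fin n) :
    HasDerivAt (fun s => highGainScale θ (z s - x s) i)
      ((highGainScale θ (fun j => f j (z t) - f j (x t))
        + θ • ((A + vecMulVec k c) *ᵥ highGainScale θ (z t - x t)) + (θ * v) • k) i) t := by
  refine (((hz i).sub (hx i)).const_mul (θ ^ (i : ℕ))⁻¹).congr_deriv ?_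
  simp only [Pi.add_apply, Pi.smul_apply, smul_eq_mul,
    shift_add_vecMulVec_mulVec_apply hA hc h0, highGainScale, Pi.sub_apply]
  split_ifs <;> · field_simp; ring

end HighGain

/-- ISS estimate for the predictor term of the high-gain observer:
`|f₁(z₁(t)) + z₂(t) - f₁(x₁(t)) - x₂(t)| ≤ (L+θ) √(K₂/K₁) exp(-θμt/(4‖P‖)) ‖z(0)-x(0)‖
  + 2(L+θ) (‖P‖‖k‖/μ) √(K₂/K₁) sup_{0≤τ≤t} |v(τ)|`. -/
theorem stmt8 (n : ℕ) (hn : 2 ≤ n) (L : ℝ) (hL : 0 ≤ L)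
    (f : Fin n → (Fin n → ℝ) → ℝ)
    (hfLip : ∀ i (x z : Fin n → ℝ), |f i x - f i z| ≤
      L * Real.sqrt (∑ j ∈ Finset.univ.filter (fun j => j ≤ i), (x j - z j) ^ 2))
    (A : Matrix (Fin n) (Fin n) ℝ)
    (hA : ∀ i j : Fin n, A i j = if (j : ℕ) = (i : ℕ) + 1 then 1 else 0)
    (c : Fin n → ℝ) (hc : ∀ i, c i = if (i : ℕ) = 0 then 1 else 0)
    (k : Fin n → ℝ)
    (P : Matrix (Fin n) (Fin n) ℝ) (hP : P.PosDef)
    (μ K₁ K₂ : ℝ) (hμ : 0 < μ) (hK₁ : 0 < K₁) (hK₂ : 0 < K₂)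
    (hLyap : ∀ z : Fin n → ℝ,
      z ⬝ᵥ ((P * (A + Matrix.vecMulVec k c) + (A + Matrix.vecMulVec k c)ᵀ * P) *ᵥ z)
        ≤ -2 * μ * ∑ i, z i ^ 2)
    (hPbounds : ∀ z : Fin n → ℝ,
      K₁ * ∑ i, z i ^ 2 ≤ z ⬝ᵥ (P *ᵥ z) ∧ z ⬝ᵥ (P *ᵥ z) ≤ K₂ * ∑ i, z i ^ 2)
    (θ : ℝ)
    (hθ : max 1 (2 * ‖Matrix.toEuclideanCLM (𝕜 := ℝ) P‖ * L * Real.sqrt n / μ) ≤ θ)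
    (v : ℝ → ℝ)
    (hvbdd : ∃ M, ∀ t, 0 ≤ t → |v t| ≤ M)
    (x z : ℝ → Fin n → ℝ)
    (hx : ∀ t, 0 ≤ t → ∀ i, HasDerivAt (fun s => x s i)
      (f i (x t) + if h : (i : ℕ) + 1 < n then x t ⟨(i : ℕ) + 1, h⟩ else 0) t)
    (hz : ∀ t, 0 ≤ t → ∀ i, HasDerivAt (fun s => z s i)
      (f i (z t) + (if h : (i : ℕ) + 1 < n then z t ⟨(i : ℕ) + 1, h⟩ else 0)
        + θ ^ ((i : ℕ) + 1) * k i * (z t ⟨0, by omega⟩ - x t ⟨0, by omega⟩ + v t)) t) :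
    ∀ t, 0 ≤ t →
      |f ⟨0, by omega⟩ (z t) + z t ⟨1, by omega⟩ - f ⟨0, by omega⟩ (x t) - x t ⟨1, by omega⟩| ≤
        (L + θ) * Real.sqrt (K₂ / K₁)
            * Real.exp (-(θ * μ * t / (4 * ‖Matrix.toEuclideanCLM (𝕜 := ℝ) P‖)))
            * Real.sqrt (∑ i, (z 0 i - x 0 i) ^ 2)
          + 2 * (L + θ)
            * (‖Matrix.toEuclideanCLM (𝕜 := ℝ) P‖ * Real.sqrt (∑ i, k i ^ 2) / μ)
            * Real.sqrt (K₂ / K₁) * sSup ((fun τ => |v τ|) '' Set.Icc 0 t) := by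
  intro t ht
  have h0 : 0 < n := by omega
  have hθ1 : 1 ≤ θ := (le_max_left _ _).trans hθ
  have hgain : 2 * ‖toEuclideanCLM (𝕜 := ℝ) P‖ * (L * √n) ≤ θ * μ := by
    have h := (le_max_right _ _).trans hθ
    rw [div_le_iff₀ hμ] at h
    linarith
  have hvS : ∀ τ ∈ Icc 0 t, |v τ| ≤ sSup ((fun τ => |v τ|) '' Icc 0 t) := by
    obtain ⟨M, hM⟩ := hvbdd
    exact fun τ hτ =>
      le_csSup ⟨M, by rintro _ ⟨σ, hσ, rfl⟩; exact hM σ hσ.1⟩ (mem_image_of_mem _ hτ)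
  have : Nonempty (Fin n) := ⟨⟨0, h0⟩⟩
  have hiss := (isHermitian_iff_isSymm.mp hP.isHermitian).sqrt_sum_sq_le_of_hasDerivAt
    (u := fun s => highGainScale θ (z s - x s))
    (d := fun s => highGainScale θ (fun j => f j (z s) - f j (x s))) hLyap hPbounds hμ hK₁ hK₂
    (zero_lt_one.trans_le hθ1) hgain ht
    (fun s hs => hasDerivAt_highGainScale_sub h0 (zero_lt_one.trans_le hθ1).ne' hA hc
      (hx s hs.1) (hz s hs.1))
    (fun s _ => (sqrt_sum_sq_le_sqrt_card_mul (by positivity)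
      (abs_highGainScale_sub_le hL hθ1 hfLip (x s) (z s))).trans_eq
        (by rw [Fintype.card_fin]; ring)) hvS
  calc _ ≤ (L + θ) * √(∑ i, highGainScale θ (z t - x t) i ^ 2) :=
        abs_output_sub_le hL hθ1 hfLip (x t) (z t) rfl rfl
    _ ≤ _ := by
        grw [hiss, sum_sq_highGainScale_le hθ1 (z 0 - x 0)]
        simp only [Pi.sub_apply]
        exact le_of_eq (by ring)
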